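/- In the algorithm AbstractFlow, no residual s_i-to-t_j path with i > j exists with respect to the initial preprocessed capacities c_0, nor with respect to any residual capacities c_{k,l} with k <= l arising during the algorithm. -/

import Mathlib

/-!
Induct along the iteration order, carrying nonnegativity of the capacities and the absence of
back paths. Let `f` be the maximum `s_k`-`t_l` flow augmented in one iteration. By flow
conservation, the tail of a dart carrying negative flow reaches its head along darts of positive
flow, or else reaches `t_l` while `s_k` reaches its head. Bypassing such darts turns a residual
`s_i`-`t_j` path after the augmentation into a residual `s_i`-`t_j` path before it, or into a pair
of residual paths `s_i`-`t_l` and `s_k`-`t_j`. For `j < i` these are back paths unless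
`k ≤ j < i ≤ l`, and then `s_i`-`t_l` is ruled out by Invariant 2 if `i > k + 1`, and by
maximality of the previous flow, from `s_{k+1}` to `t_l`, if `i = k + 1`.
-/

open Finset

variable {V D F : Type}

/-- `p` is a path of darts from `u` to `v`. -/
def IsPathFrom (head tail : D → V) : V → V → List D → Prop
  | u, v, [] => u = v
  | u, v, d :: p => tail d = u ∧ IsPathFrom head tail (head d) v p

/-- The vertices visited by a path starting at `u`. -/
def pathVertices (head : D → V) (u : V) (p : List D) : List V := u :: p.map head

/-- A path (or cycle) is residual iff every dart has strictly positive (residual) capacity. -/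
def IsResidual (c : D → ℝ) (p : List D) : Prop := ∀ d ∈ p, 0 < c d

/-- Net flow into a vertex: sum of flow over darts whose head is `v`. -/
def netInto [Fintype D] [DecidableEq V] (head : D → V) (f : D → ℝ) (v : V) : ℝ :=
  ∑ d ∈ Finset.univ.filter (fun d => head d = v), f d

/-- `f` is a flow w.r.t. capacities `c`: antisymmetric, capacity-respecting,
balanced at every vertex other than `s` and `t`. -/
def IsFlow [Fintype D] [DecidableEq V] (head tail : D → V) (rev : D → D)
    (c f : D → ℝ) (s t : V) : Prop :=
  (∀ d, f (rev d) = - f d) ∧ (∀ d, f d ≤ c d) ∧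
  ∀ v, v ≠ s → v ≠ t → netInto head f v = 0

/-- The value of a flow: net flow entering the sink `t`. -/
def flowValue [Fintype D] [DecidableEq V] (head : D → V) (f : D → ℝ) (t : V) : ℝ :=
  netInto head f t

/-- A leftmost maximum st-flow: a maximum flow whose residual capacities render
every clockwise cycle non-residual. -/
def IsLeftmostMaxFlow [Fintype D] [DecidableEq V]
    (head tail : D → V) (rev : D → D) (IsClockwiseCycle : List D → Prop)
    (c f : D → ℝ) (s t : V) : Prop :=
  IsFlow head tail rev c f s t ∧
  (∀ f', IsFlow head tail rev c f' s t → flowValue head f' t ≤ flowValue head f t) ∧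
  ∀ p, IsClockwiseCycle p → ¬ IsResidual (fun d => c d - f d) p

/-- The data of a run of the algorithm AbstractFlow on terminals
`s 1, t 1, ..., s m, t m` (in clockwise boundary order):
`c0` are the preprocessed capacities (all s_j-to-t_i residual paths for `i < j` and
all clockwise cycles saturated); then for `j = 1..m` and `i = j` down to `1`,
`prev i j` are the residual capacities at the start of iteration `(i,j)`,
`fl i j` is the leftmost maximum `s i`-to-`t j` flow w.r.t. `prev i j`, and
`cap i j` the resulting residual capacities. -/
def AbstractFlowRun [Fintype D] [DecidableEq V]
    (head tail : D → V) (rev : D → D) (IsClockwiseCycle : List D → Prop)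
    (m : ℕ) (s t : ℕ → V) (c0 : D → ℝ) (prev cap fl : ℕ → ℕ → D → ℝ) : Prop :=
  -- preprocessing
  (∀ i j, 1 ≤ i → i < j → j ≤ m →
    ∀ p, IsPathFrom head tail (s j) (t i) p → ¬ IsResidual c0 p) ∧
  (∀ p, IsClockwiseCycle p → ¬ IsResidual c0 p) ∧
  -- the iteration order of the double loop
  (prev 1 1 = c0) ∧
  (∀ j, 1 < j → j ≤ m → prev j j = cap 1 (j - 1)) ∧
  (∀ i j, 1 ≤ i → i < j → j ≤ m → prev i j = cap (i + 1) j) ∧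
  -- each iteration augments a leftmost maximum flow
  (∀ i j, 1 ≤ i → i ≤ j → j ≤ m →
    IsLeftmostMaxFlow head tail rev IsClockwiseCycle (prev i j) (fl i j) (s i) (t j) ∧
    ∀ d, cap i j d = prev i j d - fl i j d)


open Filter Topology in
theorem exists_pos_forall_mul_le {ι : Type*} [Finite ι] {g r : ι → ℝ} (hr : ∀ i, 0 ≤ r i)
    (hgr : ∀ i, 0 < g i → 0 < r i) : ∃ ε > 0, ∀ i, ε * g i ≤ r i := by
  have hsmall : ∀ i, ∀ᶠ ε in 𝓝[>] (0 : ℝ), ε * g i ≤ r i := by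
    intro i
    rcases le_or_gt (g i) 0 with hg | hg
    · filter_upwards [self_mem_nhdsWithin] with ε hε
      exact (mul_nonpos_of_nonneg_of_nonpos (le_of_lt hε) hg).trans (hr i)
    · have hlim : Tendsto (fun ε => ε * g i) (𝓝[>] 0) (𝓝 0) := by
        have hid : Tendsto (fun ε : ℝ => ε) (𝓝[>] 0) (𝓝 0) :=
          tendsto_nhdsWithin_of_tendsto_nhds tendsto_id
        simpa using hid.mul_const (g i)
      exact hlim.eventually (ge_mem_nhds (hgr i hg))
  obtain ⟨ε, hle, hpos⟩ := ((eventually_all.2 hsmall).and self_mem_nhdsWithin).exists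
  exact ⟨ε, hpos, hle⟩

def ResidualReach (head tail : D → V) (c : D → ℝ) : V → V → Prop :=
  Relation.ReflTransGen fun a b => ∃ d, 0 < c d ∧ tail d = a ∧ head d = b

section Paths

variable {head tail : D → V} {c : D → ℝ}

theorem residualReach_iff_exists_path {u v : V} :
    ResidualReach head tail c u v ↔ ∃ p, IsPathFrom head tail u v p ∧ IsResidual c p := by
  constructor
  · intro h
    induction h using Relation.ReflTransGen.head_induction_on with
    | refl => exact ⟨[], rfl, by simp [IsResidual]⟩
    | head hstep _ ih =>
      obtain ⟨d, hd, rfl, rfl⟩ := hstep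
      obtain ⟨p, hp, hres⟩ := ih
      exact ⟨d :: p, ⟨rfl, hp⟩, List.forall_mem_cons.2 ⟨hd, hres⟩⟩
  · rintro ⟨p, hp, hres⟩
    induction p generalizing u with
    | nil => exact hp ▸ Relation.ReflTransGen.refl
    | cons d p ih =>
      obtain ⟨rfl, hp⟩ := hp
      obtain ⟨hd, hres⟩ := List.forall_mem_cons.1 hres
      exact Relation.ReflTransGen.head ⟨d, hd, rfl, rfl⟩ (ih hp hres)

theorem ResidualReach.mono {c' : D → ℝ} (hcc' : ∀ d, 0 < c d → 0 < c' d) {u v : V}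
    (h : ResidualReach head tail c u v) : ResidualReach head tail c' u v :=
  Relation.ReflTransGen.mono (fun _ _ ⟨d, hd, hdt, hdh⟩ => ⟨d, hcc' d hd, hdt, hdh⟩) _ _ h

theorem residualReach_swap {u v : V} :
    ResidualReach tail head c u v ↔ ResidualReach head tail c v u := by
  unfold ResidualReach
  rw [← Relation.reflTransGen_swap]
  simp only [and_comm (a := tail _ = _)]

end Paths

theorem tail_rev {head tail : D → V} {rev : D → D} (hrev : ∀ d, rev (rev d) = d)
    (hheadrev : ∀ d, head (rev d) = tail d) (d : D) : tail (rev d) = head d := by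
  rw [← hheadrev, hrev]

section Flows

variable [Fintype D] [DecidableEq V] {head tail : D → V} {rev : D → D}

theorem netInto_add (f g : D → ℝ) (v : V) :
    netInto head (f + g) v = netInto head f v + netInto head g v := by
  simp [netInto, Finset.sum_add_distrib]

theorem netInto_smul (a : ℝ) (f : D → ℝ) (v : V) :
    netInto head (a • f) v = a * netInto head f v := by
  simp [netInto, Finset.mul_sum]

theorem netInto_tail_eq_neg (hrev : ∀ d, rev (rev d) = d)
    (hheadrev : ∀ d, head (rev d) = tail d) {f : D → ℝ} (hanti : ∀ d, f (rev d) = -f d)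
    (v : V) : netInto tail f v = -netInto head f v := by
  unfold netInto
  rw [← Finset.sum_neg_distrib]
  refine Finset.sum_nbij' rev rev (by simp [hheadrev]) (by simp [tail_rev hrev hheadrev])
    (fun d _ => hrev d) (fun d _ => hrev d) (fun d _ => ?_)
  rw [hanti, neg_neg]

theorem sum_netInto_eq_sum_cut (hrev : ∀ d, rev (rev d) = d)
    (hheadrev : ∀ d, head (rev d) = tail d) {f : D → ℝ} (hanti : ∀ d, f (rev d) = -f d)
    (R : Finset V) :
    ∑ v ∈ R, netInto head f v = ∑ d ∈ univ.filter (fun d => head d ∈ R ∧ tail d ∉ R), f d := by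
  have hinner : ∑ d ∈ univ.filter (fun d => head d ∈ R ∧ tail d ∈ R), f d = 0 := by
    refine Finset.sum_involution (fun d _ => rev d) (fun d _ => by rw [hanti, add_neg_cancel])
      (fun d _ hfd hd => hfd ?_) (fun d hd => ?_) (fun d _ => hrev d)
    · linarith [hanti d, congrArg f hd]
    · simp only [Finset.mem_filter, Finset.mem_univ, true_and] at hd ⊢
      rw [hheadrev, tail_rev hrev hheadrev]
      exact hd.symm
  unfold netInto
  rw [Finset.sum_fiberwise_eq_sum_filter univ R head f,
    ← Finset.sum_filter_add_sum_filter_not _ (fun d => tail d ∈ R)]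
  simp only [Finset.filter_filter, hinner, zero_add]

theorem flowValue_nonneg_of_isMaxFlow {c f : D → ℝ} {s t : V} (hc : ∀ d, 0 ≤ c d)
    (hmax : ∀ f', IsFlow head tail rev c f' s t → flowValue head f' t ≤ flowValue head f t) :
    0 ≤ flowValue head f t := by
  simpa [flowValue, netInto] using hmax 0 ⟨by simp, hc, by simp [netInto]⟩

variable [Fintype V]

theorem netInto_source_nonpos (hrev : ∀ d, rev (rev d) = d)
    (hheadrev : ∀ d, head (rev d) = tail d) {c f : D → ℝ} {s t : V}
    (hf : IsFlow head tail rev c f s t) (hval : 0 ≤ flowValue head f t) :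
    netInto head f s ≤ 0 := by
  obtain ⟨hanti, -, hcons⟩ := hf
  have htotal := sum_netInto_eq_sum_cut hrev hheadrev hanti (tail := tail) univ
  simp only [Finset.mem_univ, not_true_eq_false, and_false, Finset.filter_false,
    Finset.sum_empty] at htotal
  by_cases hst : s = t
  · subst hst
    rw [Finset.sum_eq_single s (fun v _ hv => hcons v hv hv) (by simp)] at htotal
    exact htotal.le
  · rw [Finset.sum_eq_add s t hst (fun v _ hv => hcons v hv.1 hv.2) (by simp) (by simp)]
      at htotal
    unfold flowValue at hval
    linarith

/-- The set `R` of vertices reachable from `head d₀` along darts of positive flow has no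
positive flow leaving it, so the flow entering `R` is at least `f d₀` if `tail d₀ ∉ R`;
this contradicts conservation unless `t ∈ R`. -/
theorem reach_tail_or_sink (hrev : ∀ d, rev (rev d) = d)
    (hheadrev : ∀ d, head (rev d) = tail d) {f : D → ℝ} {s t : V}
    (hanti : ∀ d, f (rev d) = -f d) (hcons : ∀ v, v ≠ s → v ≠ t → netInto head f v = 0)
    (hs : netInto head f s ≤ 0) {d₀ : D} (hd₀ : 0 < f d₀) :
    ResidualReach head tail f (head d₀) (tail d₀) ∨ ResidualReach head tail f (head d₀) t := by
  classical
  by_contra! ⟨htail, hsink⟩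
  set R := univ.filter fun v => ResidualReach head tail f (head d₀) v
  have hmem : ∀ v, v ∈ R ↔ ResidualReach head tail f (head d₀) v := by simp [R]
  have hentering : ∀ d ∈ univ.filter (fun d => head d ∈ R ∧ tail d ∉ R), 0 ≤ f d := by
    intro d hd
    simp only [Finset.mem_filter, Finset.mem_univ, true_and, hmem] at hd
    by_contra! hneg
    refine hd.2 (Relation.ReflTransGen.tail hd.1 ⟨rev d, ?_, ?_, hheadrev d⟩)
    · linarith [hanti d]
    · exact tail_rev hrev hheadrev d
  have hd₀mem : d₀ ∈ univ.filter (fun d => head d ∈ R ∧ tail d ∉ R) := by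
    simp only [Finset.mem_filter, Finset.mem_univ, true_and, hmem]
    exact ⟨Relation.ReflTransGen.refl, htail⟩
  have hR : ∑ v ∈ R, netInto head f v ≤ 0 := by
    refine Finset.sum_nonpos fun v hv => ?_
    by_cases hvs : v = s
    · exact hvs ▸ hs
    · exact (hcons v hvs fun hvt => hsink (hvt ▸ (hmem v).1 hv)).le
  rw [sum_netInto_eq_sum_cut hrev hheadrev hanti] at hR
  linarith [Finset.single_le_sum hentering hd₀mem]

/-- `reach_tail_or_sink` in the reversed network, where `f` flows from `t` to `s`. -/
theorem reach_tail_or_source (hrev : ∀ d, rev (rev d) = d)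
    (hheadrev : ∀ d, head (rev d) = tail d) {f : D → ℝ} {s t : V}
    (hanti : ∀ d, f (rev d) = -f d) (hcons : ∀ v, v ≠ s → v ≠ t → netInto head f v = 0)
    (ht : 0 ≤ netInto head f t) {d₀ : D} (hd₀ : 0 < f d₀) :
    ResidualReach head tail f (head d₀) (tail d₀) ∨ ResidualReach head tail f s (tail d₀) := by
  have hneg := netInto_tail_eq_neg hrev hheadrev hanti
  have := reach_tail_or_sink (head := tail) (tail := head) (s := t) (t := s) hrev
    (tail_rev hrev hheadrev) hanti (fun v hvt hvs => by rw [hneg, hcons v hvs hvt, neg_zero])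
    (by rw [hneg]; linarith) hd₀
  simpa only [residualReach_swap] using this

theorem ResidualReach.sub_flow_cases (hrev : ∀ d, rev (rev d) = d)
    (hheadrev : ∀ d, head (rev d) = tail d) {c f : D → ℝ} {s t : V}
    (hf : IsFlow head tail rev c f s t) (hval : 0 ≤ flowValue head f t) {u v : V}
    (h : ResidualReach head tail (c - f) u v) :
    ResidualReach head tail c u v ∨
      (ResidualReach head tail c u t ∧ ResidualReach head tail c s v) := by
  have hs := netInto_source_nonpos hrev hheadrev hf hval
  obtain ⟨hanti, hle, hcons⟩ := hf
  have hflow : ∀ {a b}, ResidualReach head tail f a b → ResidualReach head tail c a b :=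
    ResidualReach.mono fun d hd => hd.trans_le (hle d)
  induction h using Relation.ReflTransGen.trans_induction_on with
  | refl => exact Or.inl .refl
  | single hstep =>
    obtain ⟨d, hd, rfl, rfl⟩ := hstep
    by_cases hfd : 0 ≤ f d
    · exact Or.inl (.single ⟨d, by linarith [Pi.sub_apply c f d], rfl, rfl⟩)
    · have hrevd : 0 < f (rev d) := by linarith [hanti d]
      have hsink := reach_tail_or_sink hrev hheadrev hanti hcons hs hrevd
      have hsource := reach_tail_or_source hrev hheadrev hanti hcons hval hrevd
      rw [hheadrev, tail_rev hrev hheadrev] at hsink hsource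
      rcases hsink with hbypass | hsink
      · exact Or.inl (hflow hbypass)
      rcases hsource with hbypass | hsource
      · exact Or.inl (hflow hbypass)
      exact Or.inr ⟨hflow hsink, hflow hsource⟩
  | trans _ _ ih₁ ih₂ =>
    rcases ih₁ with h₁ | ⟨h₁t, h₁s⟩ <;> rcases ih₂ with h₂ | ⟨h₂t, h₂s⟩
    · exact Or.inl (h₁.trans h₂)
    · exact Or.inr ⟨h₁.trans h₂t, h₂s⟩
    · exact Or.inr ⟨h₁t, h₁s.trans h₂⟩
    · exact Or.inr ⟨h₁t, h₂s⟩

end Flows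

section Augmentation

variable [DecidableEq D] {head tail : D → V} {rev : D → D}

def dartFlow (rev : D → D) (d : D) : D → ℝ :=
  Pi.single d 1 - Pi.single (rev d) 1

def pathFlow (rev : D → D) : List D → D → ℝ
  | [] => 0
  | d :: p => dartFlow rev d + pathFlow rev p

theorem pathFlow_rev (hrev : ∀ d, rev (rev d) = d) (p : List D) (e : D) :
    pathFlow rev p (rev e) = -pathFlow rev p e := by
  have hrev_eq : ∀ a b, rev a = b ↔ a = rev b :=
    fun a b => ⟨fun h => h ▸ (hrev a).symm, fun h => h ▸ hrev b⟩
  induction p with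
  | nil => simp [pathFlow]
  | cons d p ih =>
    simp only [pathFlow, dartFlow, Pi.add_apply, Pi.sub_apply, ih, Pi.single_apply, hrev_eq,
      hrev]
    ring

theorem pathFlow_nonpos_of_not_mem {p : List D} {e : D} (he : e ∉ p) :
    pathFlow rev p e ≤ 0 := by
  induction p with
  | nil => simp [pathFlow]
  | cons d p ih =>
    simp only [List.mem_cons, not_or] at he
    obtain ⟨hed, hep⟩ := he
    have : 0 ≤ (Pi.single (rev d) 1 : D → ℝ) e := by
      rw [Pi.single_apply]; split_ifs <;> norm_num
    simp only [pathFlow, dartFlow, Pi.add_apply, Pi.sub_apply, Pi.single_eq_of_ne hed]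
    linarith [ih hep]

variable [Fintype D] [DecidableEq V]

theorem netInto_dartFlow (hheadrev : ∀ d, head (rev d) = tail d) (d : D) (v : V) :
    netInto head (dartFlow rev d) v =
      (if head d = v then 1 else 0) - (if tail d = v then 1 else 0) := by
  simp [netInto, dartFlow, Finset.sum_sub_distrib, hheadrev]

theorem netInto_pathFlow (hheadrev : ∀ d, head (rev d) = tail d) {u w : V} {p : List D}
    (hp : IsPathFrom head tail u w p) (v : V) :
    netInto head (pathFlow rev p) v = (if w = v then 1 else 0) - (if u = v then 1 else 0) := by
  induction p generalizing u with
  | nil =>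
    obtain rfl : u = w := hp
    simp [pathFlow, netInto]
  | cons d p ih =>
    obtain ⟨rfl, hp⟩ := hp
    rw [pathFlow, netInto_add, netInto_dartFlow hheadrev, ih hp]
    ring

end Augmentation

/-- Augmenting `f` by a small multiple of the path flow of a residual `s`-`t` path would
increase its value. -/
theorem not_residualReach_sub_of_isMaxFlow [Fintype D] [DecidableEq V] {head tail : D → V}
    {rev : D → D} (hrev : ∀ d, rev (rev d) = d)
    (hheadrev : ∀ d, head (rev d) = tail d) {c f : D → ℝ} {s t : V}
    (hf : IsFlow head tail rev c f s t)
    (hmax : ∀ f', IsFlow head tail rev c f' s t → flowValue head f' t ≤ flowValue head f t)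
    (hst : s ≠ t) : ¬ ResidualReach head tail (c - f) s t := by
  classical
  intro h
  obtain ⟨p, hp, hres⟩ := residualReach_iff_exists_path.1 h
  obtain ⟨hanti, hle, hcons⟩ := hf
  obtain ⟨ε, hε, hεle⟩ := exists_pos_forall_mul_le (g := pathFlow rev p) (r := c - f)
    (fun d => sub_nonneg.2 (hle d))
    (fun d hd => hres d (by_contra fun hdp => (pathFlow_nonpos_of_not_mem hdp).not_gt hd))
  have haug : IsFlow head tail rev c (f + ε • pathFlow rev p) s t := by
    refine ⟨fun d => ?_, fun d => ?_, fun v hvs hvt => ?_⟩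
    · simp only [Pi.add_apply, Pi.smul_apply, smul_eq_mul, hanti, pathFlow_rev hrev]
      ring
    · have hroom := hεle d
      simp only [Pi.sub_apply] at hroom
      simp only [Pi.add_apply, Pi.smul_apply, smul_eq_mul]
      linarith
    · rw [netInto_add, netInto_smul, hcons v hvs hvt, netInto_pathFlow hheadrev hp,
        if_neg (Ne.symm hvt), if_neg (Ne.symm hvs)]
      ring
  have hgain := hmax _ haug
  rw [flowValue, flowValue, netInto_add, netInto_smul, netInto_pathFlow hheadrev hp,
    if_pos rfl, if_neg hst] at hgain
  linarith

def NoBackPath (head tail : D → V) (m : ℕ) (s t : ℕ → V) (c : D → ℝ) : Prop :=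
  ∀ i j, 1 ≤ j → j < i → i ≤ m → ¬ ResidualReach head tail c (s i) (t j)

section NoBackPath

variable {head tail : D → V} {m : ℕ} {s t : ℕ → V}

theorem noBackPath_iff {c : D → ℝ} :
    NoBackPath head tail m s t c ↔ ∀ i j, 1 ≤ j → j < i → i ≤ m →
      ∀ p, IsPathFrom head tail (s i) (t j) p → ¬ IsResidual c p := by
  simp only [NoBackPath, residualReach_iff_exists_path, not_exists, not_and]

theorem NoBackPath.sub_of_isFlow [Fintype V] [Fintype D] [DecidableEq V] {rev : D → D}
    (hrev : ∀ d, rev (rev d) = d) (hheadrev : ∀ d, head (rev d) = tail d)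
    {c f : D → ℝ} {k l : ℕ} (hl : 1 ≤ l) (hkm : k ≤ m)
    (hf : IsFlow head tail rev c f (s k) (t l)) (hval : 0 ≤ flowValue head f (t l))
    (hback : NoBackPath head tail m s t c)
    (hfront : ∀ i, k < i → i ≤ l → ¬ ResidualReach head tail c (s i) (t l)) :
    NoBackPath head tail m s t (c - f) := by
  intro i j hj hji him h
  rcases h.sub_flow_cases hrev hheadrev hf hval with h | ⟨hil, hkj⟩
  · exact hback i j hj hji him h
  by_cases hjk : j < k
  · exact hback k j hj hjk hkm hkj
  by_cases hli : l < i
  · exact hback i l hl hli him hil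
  exact hfront i (by omega) (by omega) hil

end NoBackPath

section Run

variable [Fintype D] [DecidableEq V] {head tail : D → V} {rev : D → D}
  {IsClockwiseCycle : List D → Prop} {m : ℕ} {s t : ℕ → V} {c0 : D → ℝ}
  {prev cap fl : ℕ → ℕ → D → ℝ}

theorem AbstractFlowRun.cap_induction
    (hrun : AbstractFlowRun head tail rev IsClockwiseCycle m s t c0 prev cap fl)
    {P : (D → ℝ) → Prop} (h0 : P c0)
    (hstep : ∀ k l, 1 ≤ k → k ≤ l → l ≤ m → P (prev k l) → P (cap k l))
    {k l : ℕ} (hk : 1 ≤ k) (hkl : k ≤ l) (hlm : l ≤ m) : P (cap k l) := by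
  obtain ⟨-, -, hfirst, hdiag, hcol, -⟩ := hrun
  have hcolumn : ∀ l, l ≤ m → P (prev l l) → ∀ k, 1 ≤ k → k ≤ l → P (cap k l) := by
    intro l hlm hPdiag k hk hkl
    induction hkl using Nat.decreasingInduction with
    | self => exact hstep l l hk le_rfl hlm hPdiag
    | of_succ k hkl ih => exact hstep k l hk hkl.le hlm (hcol k l hk hkl hlm ▸ ih (by omega))
  have hPdiag : ∀ l, 1 ≤ l → l ≤ m → P (prev l l) := by
    intro l hl hlm
    induction l, hl using Nat.le_induction with
    | base => exact hfirst ▸ h0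
    | succ l hl ih =>
      rw [hdiag (l + 1) (by omega) hlm, Nat.add_sub_cancel]
      exact hcolumn l (by omega) (ih (by omega)) 1 le_rfl hl
  exact hcolumn l hlm (hPdiag l (hk.trans hkl) hlm) k hk hkl

theorem AbstractFlowRun.not_residualReach_prev [Fintype V] (hrev : ∀ d, rev (rev d) = d)
    (hheadrev : ∀ d, head (rev d) = tail d)
    (hrun : AbstractFlowRun head tail rev IsClockwiseCycle m s t c0 prev cap fl)
    (hinv2 : ∀ i k j, 1 ≤ i → i ≤ k → k ≤ m → i < j → j ≤ m →
      ∀ p, IsPathFrom head tail (s j) (t k) p → ¬ IsResidual (cap i k) p)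
    {i k l : ℕ} (hk : 1 ≤ k) (hki : k < i) (hil : i ≤ l) (hlm : l ≤ m) :
    ¬ ResidualReach head tail (prev k l) (s i) (t l) := by
  obtain ⟨-, -, -, -, hcol, hiter⟩ := hrun
  rw [hcol k l hk (by omega) hlm]
  rcases (Nat.succ_le_of_lt hki).eq_or_lt with rfl | hki
  · obtain ⟨⟨hf, hmax, -⟩, hcap⟩ := hiter (k + 1) l (by omega) hil hlm
    rw [show cap (k + 1) l = prev (k + 1) l - fl (k + 1) l from funext hcap]
    refine not_residualReach_sub_of_isMaxFlow hrev hheadrev hf hmax fun hst => ?_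
    -- the empty path from `s (k + 1)` to `t l`
    exact hinv2 k l (k + 1) hk (by omega) hlm (by omega) (by omega) [] hst (by simp [IsResidual])
  · intro h
    obtain ⟨p, hp, hres⟩ := residualReach_iff_exists_path.1 h
    exact hinv2 (k + 1) l i (by omega) (by omega) hlm hki (by omega) p hp hres

end Run

theorem abstractflow_no_back_flow_general
    [Fintype V] [Fintype D] [DecidableEq V]
    (head tail : D → V) (rev : D → D) (IsClockwiseCycle : List D → Prop)
    (hrev : ∀ d, rev (rev d) = d)
    (hheadrev : ∀ d, head (rev d) = tail d)
    (m : ℕ) (s t : ℕ → V) (c0 : D → ℝ) (hc0 : ∀ d, 0 ≤ c0 d)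
    (prev cap fl : ℕ → ℕ → D → ℝ)
    (hrun : AbstractFlowRun head tail rev IsClockwiseCycle m s t c0 prev cap fl)
    -- Invariant 2 may be assumed
    (hinv2 : ∀ i k j, 1 ≤ i → i ≤ k → k ≤ m → i < j → j ≤ m →
      ∀ p, IsPathFrom head tail (s j) (t k) p → ¬ IsResidual (cap i k) p) :
    (∀ i j, 1 ≤ j → j < i → i ≤ m →
      ∀ p, IsPathFrom head tail (s i) (t j) p → ¬ IsResidual c0 p) ∧
    (∀ k l, 1 ≤ k → k ≤ l → l ≤ m → ∀ i j, 1 ≤ j → j < i → i ≤ m →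
      ∀ p, IsPathFrom head tail (s i) (t j) p → ¬ IsResidual (cap k l) p) := by
  have hback₀ : NoBackPath head tail m s t c0 :=
    noBackPath_iff.2 fun i j hj hji him => hrun.1 j i hj hji him
  refine ⟨noBackPath_iff.1 hback₀, fun k l hk hkl hlm => noBackPath_iff.1 ?_⟩
  refine (hrun.cap_induction (P := fun c => (∀ d, 0 ≤ c d) ∧ NoBackPath head tail m s t c)
    ⟨hc0, hback₀⟩ ?_ hk hkl hlm).2
  rintro k l hk hkl hlm ⟨hc, hback⟩
  obtain ⟨⟨hf, hmax, -⟩, hcap⟩ := hrun.2.2.2.2.2 k l hk hkl hlm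
  rw [show cap k l = prev k l - fl k l from funext hcap]
  exact ⟨fun d => sub_nonneg.2 (hf.2.1 d),
    hback.sub_of_isFlow hrev hheadrev (by omega) (by omega) hf
      (flowValue_nonneg_of_isMaxFlow hc hmax)
      fun i hki hil => hrun.not_residualReach_prev hrev hheadrev hinv2 hk hki hil hlm⟩

/-- **Invariant 3 (no back flow).** In AbstractFlow there is no residual
`s i`-to-`t j` path with `i > j`, neither w.r.t. the preprocessed capacities `c0`
nor w.r.t. any residual capacities `cap k l` with `k ≤ l` arising during the
algorithm.  (Invariant 2 may be assumed.) -/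
theorem abstractflow_no_back_flow
    [Fintype V] [Fintype D] [DecidableEq V] [DecidableEq D]
    (head tail : D → V) (rev : D → D) (IsClockwiseCycle : List D → Prop)
    (hrev : ∀ d, rev (rev d) = d)
    (hheadrev : ∀ d, head (rev d) = tail d)
    (m : ℕ) (s t : ℕ → V) (c0 : D → ℝ) (hc0 : ∀ d, 0 ≤ c0 d)
    (prev cap fl : ℕ → ℕ → D → ℝ)
    (hrun : AbstractFlowRun head tail rev IsClockwiseCycle m s t c0 prev cap fl)
    -- Invariant 2 may be assumed
    (hinv2 : ∀ i k j, 1 ≤ i → i ≤ k → k ≤ m → i < j → j ≤ m →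
      ∀ p, IsPathFrom head tail (s j) (t k) p → ¬ IsResidual (cap i k) p) :
    (∀ i j, 1 ≤ j → j < i → i ≤ m →
      ∀ p, IsPathFrom head tail (s i) (t j) p → ¬ IsResidual c0 p) ∧
    (∀ k l, 1 ≤ k → k ≤ l → l ≤ m → ∀ i j, 1 ≤ j → j < i → i ≤ m →
      ∀ p, IsPathFrom head tail (s i) (t j) p → ¬ IsResidual (cap k l) p) :=
  abstractflow_no_back_flow_general head tail rev IsClockwiseCycle hrev hheadrev m s t c0 hc0 prev
    cap fl hrun hinv2
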